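/- Let R : ℝ³ → ℝ³ be the reflection R(x₁, x₂, x₃) = (x₁, x₂, −x₃), and let B ⊆ ℝ³ be a Lebesgue-measurable set with R(B) = B and with B ∩ {x₃ = 0} of Lebesgue measure zero. Let θ̂ : ℝ³ → ℝ³ be continuously differentiable with compact support, and set θ := θ̂ + R ∘ θ̂ ∘ R. Then ∫_B ⟨Dθ̂(x), Dθ(x)⟩_F dx = ∫_{B ∩ {x₃ > 0}} ‖Dθ̂(x) + R ∘ Dθ̂(R x) ∘ R‖_F² dx; in particular ∫_B ⟨Dθ̂(x), Dθ(x)⟩_F dx ≥ 0. -/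

import Mathlib

/-!
By the chain rule, `Dθ(x) = Dθ̂(x) + R Dθ̂(Rx) R`. The reflection `R` preserves volume and maps
`B ∩ {x₃ > 0}` onto `B ∩ {x₃ < 0}`, and `B ∩ {x₃ = 0}` is null, so the integral over `B` folds onto
the upper half, where the integrand becomes `⟨A, A + RA'R⟩ + ⟨A', A' + RAR⟩` with `A = Dθ̂(x)` and
`A' = Dθ̂(Rx)`. This is `‖A + RA'R‖²`.
-/

open scoped RealInnerProductSpace
open MeasureTheory

abbrev E3 := EuclideanSpace ℝ (Fin 3)

/-- The reflection `R(x₁, x₂, x₃) = (x₁, x₂, -x₃)` of ℝ³. -/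
noncomputable def Rfun : E3 → E3 := fun x => WithLp.toLp 2 (fun i : Fin 3 => if i = 2 then -(x 2) else x i)

/-- The matrix of the reflection `R`. -/
noncomputable def Rmat : Matrix (Fin 3) (Fin 3) ℝ :=
  Matrix.diagonal fun i : Fin 3 => if i = 2 then (-1 : ℝ) else 1

/-- The Jacobian matrix of a map θ : ℝ³ → ℝ³ at x. -/
noncomputable def Jmat (θ : E3 → E3) (x : E3) : Matrix (Fin 3) (Fin 3) ℝ :=
  fun i j => fderiv ℝ θ x (EuclideanSpace.single j 1) i

/-- Frobenius inner product of 3×3 matrices. -/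
def frobInner (A B : Matrix (Fin 3) (Fin 3) ℝ) : ℝ := ∑ i, ∑ j, A i j * B i j

theorem setIntegral_eq_setIntegral_add_comp {α F : Type*} [MeasurableSpace α]
    [NormedAddCommGroup F] [NormedSpace ℝ F] {μ : Measure α} {R : α → α}
    (hR : MeasurePreserving R μ μ) (hRe : MeasurableEmbedding R) {B P : Set α}
    (hP : MeasurableSet P) (hdisj : Disjoint P (R '' P)) (hB : B =ᵐ[μ] (P ∪ R '' P : Set α))
    {f : α → F} (hf : Integrable f μ) :
    ∫ x in B, f x ∂μ = ∫ x in P, f x + f (R x) ∂μ := by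
  calc ∫ x in B, f x ∂μ = ∫ x in P ∪ R '' P, f x ∂μ := setIntegral_congr_set hB
    _ = (∫ x in P, f x ∂μ) + ∫ x in R '' P, f x ∂μ :=
      setIntegral_union hdisj (hRe.measurableSet_image.2 hP) hf.integrableOn hf.integrableOn
    _ = (∫ x in P, f x ∂μ) + ∫ x in P, f (R x) ∂μ := by rw [hR.setIntegral_image_emb hRe]
    _ = ∫ x in P, f x + f (R x) ∂μ :=
      (integral_add hf.integrableOn (hR.integrable_comp_of_integrable hf).integrableOn).symm

@[simp]
lemma Rfun_apply_two (x : E3) : Rfun x 2 = -x 2 := by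
  simp [Rfun]

lemma Rfun_involutive : Function.Involutive Rfun := by
  intro x
  ext i
  by_cases h : i = 2 <;> simp [Rfun, h]

noncomputable def Risom : E3 ≃ₗᵢ[ℝ] E3 :=
  LinearIsometryEquiv.piLpCongrRight 2 fun i =>
    if i = 2 then LinearIsometryEquiv.neg ℝ else LinearIsometryEquiv.refl ℝ ℝ

lemma coe_Risom : ⇑Risom = Rfun := by
  funext x
  ext i
  by_cases h : i = 2 <;> simp [Risom, Rfun, LinearIsometryEquiv.piLpCongrRight_apply, h]

lemma continuous_Rfun : Continuous Rfun := coe_Risom ▸ Risom.continuous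

lemma differentiable_Rfun : Differentiable ℝ Rfun := coe_Risom ▸ Risom.differentiable

lemma measurePreserving_Rfun : MeasurePreserving Rfun := coe_Risom ▸ Risom.measurePreserving

lemma measurableEmbedding_Rfun : MeasurableEmbedding Rfun :=
  coe_Risom ▸ Risom.toHomeomorph.measurableEmbedding

lemma image_Rfun_inter_pos {B : Set E3} (hRB : Rfun '' B = B) :
    Rfun '' (B ∩ {x | 0 < x 2}) = B ∩ {x | x 2 < 0} := by
  rw [Set.image_inter Rfun_involutive.injective, hRB, Rfun_involutive.image_eq_preimage_symm]
  ext x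
  simp

lemma ae_eq_inter_pos_union_inter_neg {B : Set E3} (hB0 : volume (B ∩ {x : E3 | x 2 = 0}) = 0) :
    B =ᵐ[volume] (B ∩ {x | 0 < x 2} ∪ B ∩ {x | x 2 < 0} : Set E3) := by
  refine ae_eq_set.2 ⟨measure_mono_null ?_ hB0, ?_⟩
  · rintro x ⟨hxB, hx⟩
    simp only [Set.mem_union, Set.mem_inter_iff, Set.mem_ofPred_eq, hxB, true_and, not_or,
      not_lt] at hx
    exact ⟨hxB, le_antisymm hx.1 hx.2⟩
  · rw [Set.sdiff_eq_empty.2 (Set.union_subset Set.inter_subset_left Set.inter_subset_left),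
      measure_empty]

lemma Jmat_eq_toMatrix (θ : E3 → E3) (x : E3) :
    Jmat θ x = LinearMap.toMatrix (EuclideanSpace.basisFun (Fin 3) ℝ).toBasis
      (EuclideanSpace.basisFun (Fin 3) ℝ).toBasis (fderiv ℝ θ x) := by
  ext i j
  simp [Jmat, LinearMap.toMatrix_apply]

lemma Jmat_add {f g : E3 → E3} {x : E3} (hf : DifferentiableAt ℝ f x)
    (hg : DifferentiableAt ℝ g x) : Jmat (fun y => f y + g y) x = Jmat f x + Jmat g x := by
  simp only [Jmat_eq_toMatrix, fderiv_fun_add hf hg, ContinuousLinearMap.toLinearMap_add, map_add]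

lemma Jmat_comp {f g : E3 → E3} {x : E3} (hg : DifferentiableAt ℝ g (f x))
    (hf : DifferentiableAt ℝ f x) : Jmat (g ∘ f) x = Jmat g (f x) * Jmat f x := by
  simp only [Jmat_eq_toMatrix, fderiv_comp x hg hf]
  exact LinearMap.toMatrix_comp _ _ _ _ _

lemma Jmat_Rfun (x : E3) : Jmat Rfun x = Rmat := by
  ext i j
  have h : fderiv ℝ Rfun x = (Risom : E3 →L[ℝ] E3) := coe_Risom ▸ Risom.fderiv
  fin_cases i <;> fin_cases j <;> simp [Jmat, h, coe_Risom, Rfun, Rmat]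

lemma Jmat_symmetrize {θ : E3 → E3} (hθ : Differentiable ℝ θ) (x : E3) :
    Jmat (fun y => θ y + Rfun (θ (Rfun y))) x = Jmat θ x + Rmat * Jmat θ (Rfun x) * Rmat := by
  calc Jmat (fun y => θ y + Rfun (θ (Rfun y))) x = Jmat θ x + Jmat (Rfun ∘ θ ∘ Rfun) x :=
        Jmat_add (hθ x) ((differentiable_Rfun.comp hθ).comp differentiable_Rfun x)
    _ = Jmat θ x + Rmat * Jmat θ (Rfun x) * Rmat := by
      rw [Jmat_comp (differentiable_Rfun _) (hθ.comp differentiable_Rfun x),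
        Jmat_comp (hθ _) (differentiable_Rfun x), Jmat_Rfun, Jmat_Rfun, mul_assoc]

lemma frobInner_self_nonneg (M : Matrix (Fin 3) (Fin 3) ℝ) : 0 ≤ frobInner M M :=
  Finset.sum_nonneg fun i _ => Finset.sum_nonneg fun j _ => mul_self_nonneg (M i j)

@[simp]
lemma frobInner_zero_left (M : Matrix (Fin 3) (Fin 3) ℝ) : frobInner 0 M = 0 := by
  simp [frobInner]

-- Conjugation by `Rmat` is a self-adjoint isometry for the Frobenius product.
lemma frobInner_add_conj_Rmat (A B : Matrix (Fin 3) (Fin 3) ℝ) :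
    frobInner A (A + Rmat * B * Rmat) + frobInner B (B + Rmat * A * Rmat) =
      frobInner (A + Rmat * B * Rmat) (A + Rmat * B * Rmat) := by
  simp [frobInner, Rmat, Matrix.diagonal_mul, Matrix.mul_diagonal, Fin.sum_univ_three]
  ring

lemma Continuous.frobInner {X : Type*} [TopologicalSpace X] {f g : X → Matrix (Fin 3) (Fin 3) ℝ}
    (hf : Continuous f) (hg : Continuous g) : Continuous fun x => frobInner (f x) (g x) := by
  unfold _root_.frobInner
  fun_prop

lemma continuous_Jmat {θ : E3 → E3} (hθ : ContDiff ℝ 1 θ) : Continuous (Jmat θ) := by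
  have h := hθ.continuous_fderiv one_ne_zero
  unfold Jmat
  fun_prop

lemma HasCompactSupport.Jmat {θ : E3 → E3} (hθ : HasCompactSupport θ) :
    HasCompactSupport (Jmat θ) :=
  (hθ.fderiv ℝ).comp_left
    (g := fun (L : E3 →L[ℝ] E3) i j => L (EuclideanSpace.single j 1) i) rfl

/-- For a set B symmetric under the reflection R (with negligible intersection with
the reflection plane) and a compactly supported C¹ field θ̂, the Frobenius pairing of
Dθ̂ with the Jacobian of the symmetrized field θ = θ̂ + R ∘ θ̂ ∘ R over B equals the
integral over the upper half of B of the squared Frobenius norm of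
Dθ̂(x) + R ∘ Dθ̂(Rx) ∘ R; in particular, it is nonnegative. -/
theorem symmetrized_descent_direction
    (B : Set E3) (hB : MeasurableSet B) (hRB : Rfun '' B = B)
    (hB0 : volume (B ∩ {x : E3 | x 2 = 0}) = 0)
    (θhat : E3 → E3) (hθhat : ContDiff ℝ 1 θhat) (hsupp : HasCompactSupport θhat)
    (θ : E3 → E3) (hθ : θ = fun x => θhat x + Rfun (θhat (Rfun x))) :
    (∫ x in B, frobInner (Jmat θhat x) (Jmat θ x)) =
      (∫ x in B ∩ {x : E3 | 0 < x 2},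
        frobInner (Jmat θhat x + Rmat * Jmat θhat (Rfun x) * Rmat)
          (Jmat θhat x + Rmat * Jmat θhat (Rfun x) * Rmat)) ∧
    0 ≤ ∫ x in B, frobInner (Jmat θhat x) (Jmat θ x) := by
  set S : E3 → Matrix (Fin 3) (Fin 3) ℝ :=
    fun x => Jmat θhat x + Rmat * Jmat θhat (Rfun x) * Rmat with hS
  have hJθ : ∀ x, Jmat θ x = S x := hθ ▸ Jmat_symmetrize (hθhat.differentiable one_ne_zero)
  have hint : Integrable fun x => frobInner (Jmat θhat x) (Jmat θ x) := by
    have hJ := continuous_Jmat hθhat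
    have hR := continuous_Rfun
    simp only [hJθ, hS]
    exact (hJ.frobInner (by fun_prop)).integrable_of_hasCompactSupport
      (hsupp.Jmat.mono fun x hx h0 => hx (by simp [h0]))
  set P := B ∩ {x : E3 | 0 < x 2}
  have hP : MeasurableSet P := hB.inter (measurableSet_lt measurable_const (by fun_prop))
  have hdisj : Disjoint P (Rfun '' P) := by
    rw [image_Rfun_inter_pos hRB]
    exact Set.disjoint_left.2 fun x hpos hneg => lt_asymm (b := x 2) hpos.2 hneg.2
  have hsplit :
      ∫ x in B, frobInner (Jmat θhat x) (Jmat θ x) = ∫ x in P, frobInner (S x) (S x) := by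
    rw [setIntegral_eq_setIntegral_add_comp measurePreserving_Rfun measurableEmbedding_Rfun hP
      hdisj (image_Rfun_inter_pos hRB ▸ ae_eq_inter_pos_union_inter_neg hB0) hint]
    simp only [hJθ, hS, Rfun_involutive _, frobInner_add_conj_Rmat]
  exact ⟨hsplit, hsplit ▸ integral_nonneg fun x => frobInner_self_nonneg _⟩
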